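/- For real $a \geq 2$ and $0 < x < \frac{1}{3}$, the Bessel function of the first kind satisfies $|J_a(ax)| \leq C\, e^{a(1 + \log(1/3))}\, a^{-1/3}$ for an absolute constant $C$; since $1 + \log\frac{1}{3} < 0$, one has $a^{1/3} J_a(ax) \to 0$ as $a \to \infty$, uniformly in $x \in (0, 1/3)$. -/

import Mathlib

/-- The Bessel function of the first kind of (real) order `a`, defined by its power
series `J_a(z) = ∑ₘ (-1)^m / (m! Γ(m+a+1)) (z/2)^(2m+a)`. -/
noncomputable def besselJ (a x : ℝ) : ℝ :=
  ∑' m : ℕ, ((-1 : ℝ) ^ m / ((m.factorial : ℝ) * Real.Gamma ((m : ℝ) + a + 1))) *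
    (x / 2) ^ (2 * (m : ℝ) + a)

/-!
Bounding the power series termwise with `(2m)! ≤ 4^m (m!)²` and `m! Γ(a+1) ≤ Γ(m+a+1)` compares
it with the series of `cosh`: `|J_a(2t)| ≤ t^a cosh(2t) / Γ(a+1)`. Together with the crude Stirling
bound `Γ(a+1) ≥ e^{-(a+1)} a^a` this gives `|J_a(ax)| ≤ e (x e^{1+x} / 2)^a`. For `x < 1/3` the base
is at most `e^{-1/3}` times `e/3`, and the spare factor `e^{-a/3} ≤ a^{-1/3}` pays for `a^{-1/3}`.
-/

open Real MeasureTheory Set Filter Topology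
open scoped Nat

lemma Nat.factorial_two_mul_le_four_pow_mul_sq (m : ℕ) : (2 * m)! ≤ 4 ^ m * m ! ^ 2 := by
  rw [← choose_mul_factorial_mul_factorial (by omega : m ≤ 2 * m), show 2 * m - m = m by omega,
    ← centralBinom_eq_two_mul_choose, mul_assoc, ← sq]
  exact Nat.mul_le_mul_right _ (centralBinom_le_four_pow m)

lemma Real.factorial_mul_Gamma_add_one_le {a : ℝ} (ha : 0 ≤ a) (m : ℕ) :
    m ! * Gamma (a + 1) ≤ Gamma (m + a + 1) := by
  induction m with
  | zero => simp
  | succ m ih =>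
    have hpos : 0 < (m : ℝ) + a + 1 := by positivity
    rw [Nat.factorial_succ, Nat.cast_mul, Nat.cast_succ,
      show (m : ℝ) + 1 + a + 1 = (m + a + 1) + 1 by ring, Gamma_add_one hpos.ne', mul_assoc]
    exact mul_le_mul (by linarith) ih (by positivity) hpos.le

lemma Real.exp_neg_mul_rpow_le_Gamma_add_one {a : ℝ} (ha : 0 ≤ a) :
    exp (-(a + 1)) * a ^ a ≤ Gamma (a + 1) := by
  have hint : IntegrableOn (fun x : ℝ => exp (-x) * x ^ a) (Ioi 0) := by
    simpa using GammaIntegral_convergent (by linarith : 0 < a + 1)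
  have hsub : Ioc a (a + 1) ⊆ Ioi 0 := fun y hy => ha.trans_lt hy.1
  rw [Gamma_eq_integral (by linarith), add_sub_cancel_right]
  calc exp (-(a + 1)) * a ^ a = ∫ _ in Ioc a (a + 1), exp (-(a + 1)) * a ^ a := by simp
    _ ≤ ∫ x in Ioc a (a + 1), exp (-x) * x ^ a :=
        setIntegral_mono_on (integrableOn_const (by simp)) (hint.mono_set hsub) measurableSet_Ioc
          fun y hy => mul_le_mul (exp_le_exp.mpr (by linarith [hy.2]))
            (rpow_le_rpow ha hy.1.le ha) (by positivity) (by positivity)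
    _ ≤ ∫ x in Ioi 0, exp (-x) * x ^ a :=
        setIntegral_mono_set hint
          ((ae_restrict_mem measurableSet_Ioi).mono fun y (hy : 0 < y) => by positivity)
          (Eventually.of_forall hsub)

lemma abs_besselJ_term_le {a t : ℝ} (ha : 0 ≤ a) (ht : 0 < t) (m : ℕ) :
    |(-1) ^ m / (m ! * Gamma (m + a + 1)) * t ^ (2 * (m : ℝ) + a)| ≤
      t ^ a / Gamma (a + 1) * ((2 * t) ^ (2 * m) / (2 * m)!) := by
  have hG : 0 < Gamma (a + 1) := Gamma_pos_of_pos (by linarith)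
  have hfact : ((2 * m)! : ℝ) ≤ 4 ^ m * m ! ^ 2 := by
    exact_mod_cast Nat.factorial_two_mul_le_four_pow_mul_sq m
  calc |(-1) ^ m / (m ! * Gamma (m + a + 1)) * t ^ (2 * (m : ℝ) + a)|
      = t ^ a * t ^ (2 * m) / (m ! * Gamma (m + a + 1)) := by
        rw [abs_mul, abs_div, abs_pow, abs_neg, abs_one, one_pow, abs_of_pos (by positivity),
          abs_of_pos (by positivity), show 2 * (m : ℝ) + a = ((2 * m : ℕ) : ℝ) + a by push_cast; ring,
          rpow_add ht, rpow_natCast]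
        ring
    _ ≤ t ^ a * t ^ (2 * m) / (m ! * (m ! * Gamma (a + 1))) := by
        gcongr; exact factorial_mul_Gamma_add_one_le ha m
    _ ≤ t ^ a * t ^ (2 * m) * 4 ^ m / ((2 * m)! * Gamma (a + 1)) := by
        rw [show t ^ a * t ^ (2 * m) / (m ! * (m ! * Gamma (a + 1))) =
          t ^ a * t ^ (2 * m) * 4 ^ m / (4 ^ m * m ! ^ 2 * Gamma (a + 1)) by field_simp]
        gcongr
    _ = t ^ a / Gamma (a + 1) * ((2 * t) ^ (2 * m) / (2 * m)!) := by
        rw [mul_pow, pow_mul, pow_mul, show (2 : ℝ) ^ 2 = 4 by norm_num]; ring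

lemma abs_besselJ_two_mul_le {a t : ℝ} (ha : 0 ≤ a) (ht : 0 < t) :
    |besselJ a (2 * t)| ≤ t ^ a / Gamma (a + 1) * cosh (2 * t) := by
  rw [besselJ, mul_div_cancel_left₀ t two_ne_zero, ← norm_eq_abs]
  exact tsum_of_norm_bounded ((hasSum_cosh (2 * t)).mul_left _) (abs_besselJ_term_le ha ht)

lemma abs_besselJ_mul_le {a x : ℝ} (ha : 0 < a) (hx : 0 < x) :
    |besselJ a (a * x)| ≤ exp (1 + a * (log (x / 2) + 1 + x)) := by
  have hGamma : a ^ a / Gamma (a + 1) ≤ exp (a + 1) := by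
    rw [div_le_iff₀ (Gamma_pos_of_pos (by linarith)), ← inv_mul_le_iff₀ (exp_pos _), ← exp_neg]
    exact exp_neg_mul_rpow_le_Gamma_add_one ha.le
  have hcosh : cosh (a * x) ≤ exp (a * x) := by
    rw [← cosh_add_sinh]
    exact le_add_of_nonneg_right (sinh_nonneg_iff.mpr (by positivity))
  calc |besselJ a (a * x)| = |besselJ a (2 * (a * (x / 2)))| := by ring_nf
    _ ≤ (a * (x / 2)) ^ a / Gamma (a + 1) * cosh (a * x) := by
        convert abs_besselJ_two_mul_le ha.le (by positivity : 0 < a * (x / 2)) using 3; ring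
    _ = (x / 2) ^ a * (a ^ a / Gamma (a + 1)) * cosh (a * x) := by
        rw [mul_rpow ha.le (by positivity)]; ring
    _ ≤ (x / 2) ^ a * exp (a + 1) * exp (a * x) := by gcongr
    _ = exp (1 + a * (log (x / 2) + 1 + x)) := by
        rw [rpow_def_of_pos (by positivity), ← exp_add, ← exp_add]; ring_nf

lemma log_half_add_one_add_lt {x : ℝ} (hx : 0 < x) (hx3 : x < 1 / 3) :
    log (x / 2) + 1 + x < 1 + log (1 / 3) - 1 / 3 := by
  have hlog : log x < log (1 / 3) := log_lt_log hx hx3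
  rw [log_div hx.ne' two_ne_zero]
  linarith [log_two_gt_d9]

lemma abs_besselJ_mul_le_of_lt_one_third {a x : ℝ} (ha : 0 < a) (hx : 0 < x) (hx3 : x < 1 / 3) :
    |besselJ a (a * x)| ≤ exp 1 * exp (a * (1 + log (1 / 3))) * a ^ (-(1 / 3 : ℝ)) := by
  have hexponent := mul_lt_mul_of_pos_left (log_half_add_one_add_lt hx hx3) ha
  calc |besselJ a (a * x)| ≤ exp (1 + a * (log (x / 2) + 1 + x)) := abs_besselJ_mul_le ha hx
    _ ≤ exp (1 + a * (1 + log (1 / 3)) + log a * (-(1 / 3))) :=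
        exp_le_exp.mpr (by linarith [log_le_self ha.le])
    _ = exp 1 * exp (a * (1 + log (1 / 3))) * a ^ (-(1 / 3 : ℝ)) := by
        rw [rpow_def_of_pos ha, ← exp_add, ← exp_add]

/-- For `a ≥ 2` and `0 < x < 1/3`, `|J_a(ax)| ≤ C e^{a(1 + log(1/3))} a^{-1/3}` for an
absolute constant `C`; since `1 + log(1/3) < 0`, `a^{1/3} J_a(ax) → 0` as `a → ∞`,
uniformly in `x ∈ (0, 1/3)`. -/
theorem besselJ_decay_small_x :
    (∃ C : ℝ, 0 < C ∧ ∀ a : ℝ, 2 ≤ a → ∀ x : ℝ, 0 < x → x < 1 / 3 →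
        |besselJ a (a * x)| ≤
          C * Real.exp (a * (1 + Real.log (1 / 3))) * a ^ (-(1 / 3 : ℝ))) ∧
      ∀ ε : ℝ, 0 < ε → ∃ A : ℝ, 2 ≤ A ∧ ∀ a : ℝ, A ≤ a → ∀ x : ℝ,
        0 < x → x < 1 / 3 → a ^ ((1 : ℝ) / 3) * |besselJ a (a * x)| < ε := by
  refine ⟨⟨exp 1, exp_pos 1, fun a ha x hx hx3 =>
    abs_besselJ_mul_le_of_lt_one_third (by linarith) hx hx3⟩, fun ε hε => ?_⟩
  have hrate : 1 + log (1 / 3) < 0 := by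
    rw [one_div, log_inv]
    linarith [(lt_log_iff_exp_lt (by norm_num)).2 (by linarith [exp_one_lt_d9] : exp 1 < 3)]
  have hlim : Tendsto (fun a => exp 1 * exp (a * (1 + log (1 / 3)))) atTop (𝓝 0) := by
    simpa using (tendsto_exp_atBot.comp (tendsto_id.atTop_mul_const_of_neg hrate)).const_mul (exp 1)
  obtain ⟨A, hA⟩ := eventually_atTop.1 (hlim.eventually (gt_mem_nhds hε))
  refine ⟨max A 2, le_max_right _ _, fun a haA x hx hx3 => ?_⟩
  have ha : 0 < a := by linarith [le_max_right A 2]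
  calc a ^ ((1 : ℝ) / 3) * |besselJ a (a * x)|
      ≤ a ^ ((1 : ℝ) / 3) * (exp 1 * exp (a * (1 + log (1 / 3))) * a ^ (-(1 / 3 : ℝ))) := by
        gcongr; exact abs_besselJ_mul_le_of_lt_one_third ha hx hx3
    _ = exp 1 * exp (a * (1 + log (1 / 3))) := by
        rw [rpow_neg ha.le, one_div]; field_simp
    _ < ε := hA a (le_of_max_le_left haA)
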